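/- Let 0 < α ≤ 1, σ₀ > 0, with Σ_T = 1 + α²(σ₀² - 1) > 0. Define the SDE-generated variance σ̂²_SDE(v) = σ₀² + α²·σ₀⁴·Σ_T⁻²·(v - Σ_T) and the ODE-generated variance σ̂²_ODE(v) = σ₀²·Σ_T⁻¹·v, as functions of the initialization variance v > 0. Then σ̂²_SDE(Σ_T) = σ̂²_ODE(Σ_T) = σ₀², and for v ≠ Σ_T, |σ̂²_SDE(v) - σ₀²| ≤ |σ̂²_ODE(v) - σ₀²| with equality if and only if α² σ₀² = Σ_T; moreover if α²σ₀² < Σ_T the inequality is strict. -/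

import Mathlib

theorem sde_vs_ode_error_propagation (α σ₀ : ℝ)
    (hα0 : 0 < α) (hα1 : α ≤ 1) (hσ : 0 < σ₀)
    (SigT : ℝ) (hSigT : SigT = 1 + α ^ 2 * (σ₀ ^ 2 - 1)) (hpos : 0 < SigT) :
    let sde : ℝ → ℝ := fun v => σ₀ ^ 2 + α ^ 2 * σ₀ ^ 4 * (SigT ^ 2)⁻¹ * (v - SigT)
    let ode : ℝ → ℝ := fun v => σ₀ ^ 2 * SigT⁻¹ * v
    sde SigT = σ₀ ^ 2 ∧ ode SigT = σ₀ ^ 2 ∧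
    ∀ v : ℝ, 0 < v → v ≠ SigT →
      |sde v - σ₀ ^ 2| ≤ |ode v - σ₀ ^ 2| ∧
      (|sde v - σ₀ ^ 2| = |ode v - σ₀ ^ 2| ↔ α ^ 2 * σ₀ ^ 2 = SigT) ∧
      (α ^ 2 * σ₀ ^ 2 < SigT → |sde v - σ₀ ^ 2| < |ode v - σ₀ ^ 2|) := by
  intro sde ode
  have hS : SigT ≠ 0 := hpos.ne'
  refine ⟨by simp [sde], by simp [ode, hS], ?_⟩
  intro v hv hne
  have hd : v - SigT ≠ 0 := sub_ne_zero.mpr hne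
  have h1 : sde v - σ₀ ^ 2 = (α ^ 2 * σ₀ ^ 2 / SigT) * (σ₀ ^ 2 / SigT * (v - SigT)) := by
    simp only [sde]; field_simp; ring
  have h2 : ode v - σ₀ ^ 2 = σ₀ ^ 2 / SigT * (v - SigT) := by
    simp only [ode]; field_simp
  set A := σ₀ ^ 2 / SigT * (v - SigT) with hA
  have hApos : 0 < |A| := abs_pos.mpr (mul_ne_zero (by positivity) hd)
  set c := α ^ 2 * σ₀ ^ 2 / SigT with hc
  have hc0 : 0 ≤ c := by positivity
  have hc1 : c ≤ 1 := by
    rw [hc, div_le_one hpos, hSigT]; nlinarith [sq_nonneg α, sq_nonneg σ₀]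
  have habss : |sde v - σ₀ ^ 2| = c * |A| := by
    rw [h1, abs_mul, abs_of_nonneg hc0]
  rw [habss, h2]
  refine ⟨by nlinarith, ?_, ?_⟩
  · constructor
    · intro h
      have : c = 1 := by
        have := mul_right_cancel₀ hApos.ne' (by linarith [h] : c * |A| = 1 * |A|)
        linarith
      rw [hc, div_eq_one_iff_eq hS] at this
      exact this
    · intro h
      have : c = 1 := by rw [hc, h, div_self hS]
      rw [this, one_mul]
  · intro hlt
    have : c < 1 := by rw [hc, div_lt_one hpos]; exact hlt
    nlinarith
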